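/- If J − J* is injective, then every ℝ-bilinear alternating map ω : V × V → ℂ decomposes uniquely as ω = ω^{(2,0)} + ω^{(0,2)} + ω^{(1,1)}, where ω^{(2,0)} is of type (2,0), ω^{(0,2)} is of type (0,2), and ω^{(1,1)} is of type (1,1). -/

import Mathlib

open Complex

/-- An alternating ℝ-bilinear map ω : V × V → ℂ is of type (1,1) if it lies in the
ℂ-linear span of the maps (v,w) ↦ ξ(v)ζ(w) − ξ(w)ζ(v) with ξ J-linear and ζ J*-linear. -/
def IsType11 (V : Type*) [AddCommGroup V] [Module ℝ V] (J Jstar : V →ₗ[ℝ] V)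
    (ω : V →ₗ[ℝ] V →ₗ[ℝ] ℂ) : Prop :=
  ω ∈ Submodule.span ℂ {η : V →ₗ[ℝ] V →ₗ[ℝ] ℂ | ∃ ξ ζ : V →ₗ[ℝ] ℂ,
    (∀ v, ξ (J v) = I * ξ v) ∧ (∀ v, ζ (Jstar v) = I * ζ v) ∧
    ∀ v w, η v w = ξ v * ζ w - ξ w * ζ v}

/-!
Let `B = (J - J*)⁻¹`. For an ℝ-linear `ξ : V → ℂ`, the functional `ξ ∘ (BJ + iB)` is J-linear,
and `ξ` minus it is J*-linear; so every wedge `ξ ∧ ζ`, and hence every alternating form (these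
are spanned by wedges), splits into a (2,0), a (0,2) and a (1,1) piece. Conversely the operator
`ω ↦ ω((BJ + iB)·, (BJ + iB)·)` fixes (2,0)-forms and kills (0,2)-forms as well as wedges of a
J-linear with a J*-linear functional, so it recovers the (2,0) part of any decomposition;
exchanging the roles of `J` and `J*` recovers the (0,2) part.
-/

section

variable {V : Type*} [AddCommGroup V] [Module ℝ V]

noncomputable def wedge (ξ ζ : V →ₗ[ℝ] ℂ) : V →ₗ[ℝ] V →ₗ[ℝ] ℂ :=
  ξ.smulRight ζ - ζ.smulRight ξ

@[simp] lemma wedge_apply (ξ ζ : V →ₗ[ℝ] ℂ) (v w : V) :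
    wedge ξ ζ v w = ξ v * ζ w - ξ w * ζ v := by
  simp [wedge, mul_comm]

/-- For `B = (J - J')⁻¹` this is the J-linear component of `ξ` in the splitting of
`V →ₗ[ℝ] ℂ` into J-linear and J'-linear functionals. -/
noncomputable def funcProj (J B : V →ₗ[ℝ] V) (ξ : V →ₗ[ℝ] ℂ) : V →ₗ[ℝ] ℂ :=
  ξ ∘ₗ B ∘ₗ J + I • ξ ∘ₗ B

@[simp] lemma funcProj_apply (J B : V →ₗ[ℝ] V) (ξ : V →ₗ[ℝ] ℂ) (v : V) :
    funcProj J B ξ v = ξ (B (J v)) + I * ξ (B v) := by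
  simp [funcProj]

lemma funcProj_map_complexStructure {J : V →ₗ[ℝ] V} (hJ : ∀ v, J (J v) = -v) (B : V →ₗ[ℝ] V)
    (ξ : V →ₗ[ℝ] ℂ) (v : V) : funcProj J B ξ (J v) = I * funcProj J B ξ v := by
  simp only [funcProj_apply, hJ, map_neg]
  linear_combination (-ξ (B v)) * I_sq

lemma funcProj_eq_zero {J J' B : V →ₗ[ℝ] V} (hB : ∀ v, B (J v) + J' (B v) = 0)
    {ζ : V →ₗ[ℝ] ℂ} (hζ : ∀ v, ζ (J' v) = I * ζ v) : funcProj J B ζ = 0 := by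
  ext v
  rw [funcProj_apply, ← hζ, ← map_add, hB, map_zero, LinearMap.zero_apply]

lemma funcProj_add_funcProj_neg {J J' B : V →ₗ[ℝ] V} (hB : ∀ v, B (J v - J' v) = v)
    (ξ : V →ₗ[ℝ] ℂ) : funcProj J B ξ + funcProj J' (-B) ξ = ξ := by
  ext v
  conv_rhs => rw [← hB v]
  simp only [LinearMap.add_apply, funcProj_apply, LinearMap.neg_apply, map_neg, map_sub]
  ring

/-- `ω(Pv, Pw)` for the map `P = BJ + iB` into the complexification of `V`, with `ω` extended
ℂ-bilinearly. -/
noncomputable def formProj (J B : V →ₗ[ℝ] V) :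
    (V →ₗ[ℝ] V →ₗ[ℝ] ℂ) →ₗ[ℂ] V →ₗ[ℝ] V →ₗ[ℝ] ℂ where
  toFun ω := ω.compl₁₂ (B ∘ₗ J) (B ∘ₗ J) + I • ω.compl₁₂ (B ∘ₗ J) B
    + I • ω.compl₁₂ B (B ∘ₗ J) - ω.compl₁₂ B B
  map_add' ω₁ ω₂ := by
    ext
    simp only [LinearMap.add_apply, LinearMap.sub_apply, LinearMap.smul_apply,
      LinearMap.compl₁₂_apply, smul_eq_mul]
    ring
  map_smul' z ω := by
    ext
    simp only [LinearMap.add_apply, LinearMap.sub_apply, LinearMap.smul_apply,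
      LinearMap.compl₁₂_apply, smul_eq_mul, RingHom.id_apply]
    ring

@[simp] lemma formProj_apply (J B : V →ₗ[ℝ] V) (ω : V →ₗ[ℝ] V →ₗ[ℝ] ℂ) (v w : V) :
    formProj J B ω v w = ω (B (J v)) (B (J w)) + I * ω (B (J v)) (B w)
      + I * ω (B v) (B (J w)) - ω (B v) (B w) := by
  simp [formProj]

lemma formProj_wedge (J B : V →ₗ[ℝ] V) (ξ ζ : V →ₗ[ℝ] ℂ) :
    formProj J B (wedge ξ ζ) = wedge (funcProj J B ξ) (funcProj J B ζ) := by
  ext v w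
  simp only [formProj_apply, wedge_apply, funcProj_apply]
  linear_combination (ξ (B w) * ζ (B v) - ξ (B v) * ζ (B w)) * I_sq

noncomputable def type20Submodule (J : V →ₗ[ℝ] V) : Submodule ℂ (V →ₗ[ℝ] V →ₗ[ℝ] ℂ) where
  carrier := {ω | ω.IsAlt ∧ ∀ v w, ω (J v) w = I * ω v w}
  add_mem' h₁ h₂ :=
    ⟨fun v => by simp [h₁.1 v, h₂.1 v], fun v w => by simp [h₁.2, h₂.2, mul_add]⟩
  zero_mem' := ⟨fun _ => rfl, fun _ _ => by simp⟩
  smul_mem' z ω h :=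
    ⟨fun v => by simp [h.1 v], fun v w => by
      simp only [LinearMap.smul_apply, h.2, smul_eq_mul]
      ring⟩

/-- Membership in this submodule is `IsType11 V J J'` unfolded. -/
noncomputable def type11Submodule (J J' : V →ₗ[ℝ] V) : Submodule ℂ (V →ₗ[ℝ] V →ₗ[ℝ] ℂ) :=
  Submodule.span ℂ {η | ∃ ξ ζ : V →ₗ[ℝ] ℂ,
    (∀ v, ξ (J v) = I * ξ v) ∧ (∀ v, ζ (J' v) = I * ζ v) ∧
    ∀ v w, η v w = ξ v * ζ w - ξ w * ζ v}

lemma apply_right_eq_of_mem_type20Submodule {J : V →ₗ[ℝ] V} {a : V →ₗ[ℝ] V →ₗ[ℝ] ℂ}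
    (ha : a ∈ type20Submodule J) (v w : V) : a v (J w) = I * a v w := by
  rw [← ha.1.neg, ha.2, ← ha.1.neg]
  ring

lemma wedge_mem_type20Submodule {J : V →ₗ[ℝ] V} {ξ ζ : V →ₗ[ℝ] ℂ}
    (hξ : ∀ v, ξ (J v) = I * ξ v) (hζ : ∀ v, ζ (J v) = I * ζ v) :
    wedge ξ ζ ∈ type20Submodule J :=
  ⟨fun v => by simp, fun v w => by simp only [wedge_apply, hξ, hζ]; ring⟩

lemma wedge_mem_type11Submodule {J J' : V →ₗ[ℝ] V} {ξ ζ : V →ₗ[ℝ] ℂ}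
    (hξ : ∀ v, ξ (J v) = I * ξ v) (hζ : ∀ v, ζ (J' v) = I * ζ v) :
    wedge ξ ζ ∈ type11Submodule J J' :=
  Submodule.subset_span ⟨ξ, ζ, hξ, hζ, wedge_apply ξ ζ⟩

lemma type11Submodule_comm (J J' : V →ₗ[ℝ] V) :
    type11Submodule J J' = type11Submodule J' J := by
  suffices ∀ J J' : V →ₗ[ℝ] V, type11Submodule J J' ≤ type11Submodule J' J from
    le_antisymm (this J J') (this J' J)
  intro J J'
  refine Submodule.span_le.2 fun η ⟨ξ, ζ, hξ, hζ, hη⟩ => ?_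
  have : η = -wedge ζ ξ := by
    ext v w
    simp only [hη, LinearMap.neg_apply, wedge_apply, neg_sub]
    ring
  exact this ▸ neg_mem (wedge_mem_type11Submodule hζ hξ)

lemma formProj_eq_self_of_mem_type20Submodule {J B : V →ₗ[ℝ] V}
    (hB : ∀ v, B (J v) + J (B v) = v) {a : V →ₗ[ℝ] V →ₗ[ℝ] ℂ} (ha : a ∈ type20Submodule J) :
    formProj J B a = a := by
  have hBJ : ∀ v, B (J v) = v - J (B v) := fun v => eq_sub_of_add_eq (hB v)
  ext v w
  simp only [formProj_apply, hBJ, map_sub, LinearMap.sub_apply, ha.2,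
    apply_right_eq_of_mem_type20Submodule ha]
  linear_combination (-a (B v) (B w)) * I_sq

lemma formProj_eq_zero_of_mem_type20Submodule {J J' B : V →ₗ[ℝ] V}
    (hB : ∀ v, B (J v) + J' (B v) = 0) {b : V →ₗ[ℝ] V →ₗ[ℝ] ℂ}
    (hb : b ∈ type20Submodule J') : formProj J B b = 0 := by
  have hBJ : ∀ v, B (J v) = -J' (B v) := fun v => eq_neg_of_add_eq_zero_left (hB v)
  ext v w
  simp only [formProj_apply, hBJ, map_neg, LinearMap.neg_apply, hb.2, LinearMap.zero_apply]
  linear_combination (-b (B v) (B w)) * I_sq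

lemma formProj_eq_zero_of_mem_type11Submodule {J J' B : V →ₗ[ℝ] V}
    (hB : ∀ v, B (J v) + J' (B v) = 0) {c : V →ₗ[ℝ] V →ₗ[ℝ] ℂ}
    (hc : c ∈ type11Submodule J J') : formProj J B c = 0 := by
  refine (Submodule.span_le (p := LinearMap.ker (formProj J B))).2 ?_ hc
  rintro η ⟨ξ, ζ, -, hζ, hη⟩
  have : η = wedge ξ ζ := by ext v w; simp [hη]
  rw [SetLike.mem_coe, LinearMap.mem_ker, this, formProj_wedge, funcProj_eq_zero hB hζ]
  ext
  simp

lemma formProj_add_add {J J' B : V →ₗ[ℝ] V} (hfix : ∀ v, B (J v) + J (B v) = v)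
    (hkill : ∀ v, B (J v) + J' (B v) = 0) {a b c : V →ₗ[ℝ] V →ₗ[ℝ] ℂ}
    (ha : a ∈ type20Submodule J) (hb : b ∈ type20Submodule J')
    (hc : c ∈ type11Submodule J J') : formProj J B (a + b + c) = a := by
  rw [map_add, map_add, formProj_eq_self_of_mem_type20Submodule hfix ha,
    formProj_eq_zero_of_mem_type20Submodule hkill hb,
    formProj_eq_zero_of_mem_type11Submodule hkill hc, add_zero, add_zero]

lemma inverse_comp_add_comp_eq_zero {J J' B : V →ₗ[ℝ] V} (hJ : ∀ v, J (J v) = -v)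
    (hJ' : ∀ v, J' (J' v) = -v) (hBK : ∀ v, B (J v - J' v) = v)
    (hKB : ∀ v, J (B v) - J' (B v) = v) (v : V) : B (J v) + J' (B v) = 0 := by
  have h₁ : J' (B v) = B (J (J' (B v)) + B v) := by
    conv_lhs => rw [← hBK (J' (B v)), hJ', sub_neg_eq_add]
  have h₂ : B (J v) = B (-B v - J (J' (B v))) := by
    conv_lhs => rw [← hKB v, map_sub, hJ]
  rw [h₁, h₂, ← map_add, show -B v - J (J' (B v)) + (J (J' (B v)) + B v) = 0 by abel, map_zero]

lemma exists_inverse_sub [FiniteDimensional ℝ V] {J J' : V →ₗ[ℝ] V} (hJ : ∀ v, J (J v) = -v)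
    (hJ' : ∀ v, J' (J' v) = -v) (hinj : Function.Injective (J - J')) :
    ∃ B : V →ₗ[ℝ] V, (∀ v, B (J v - J' v) = v) ∧ (∀ v, B (J v) + J (B v) = v) ∧
      ∀ v, B (J v) + J' (B v) = 0 := by
  let K := LinearEquiv.ofBijective (J - J') ⟨hinj, LinearMap.injective_iff_surjective.mp hinj⟩
  have hBK : ∀ v, K.symm (J v - J' v) = v := K.symm_apply_apply
  have hKB : ∀ v, J (K.symm v) - J' (K.symm v) = v := K.apply_symm_apply
  have hkill := inverse_comp_add_comp_eq_zero hJ hJ' hBK hKB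
  refine ⟨K.symm, hBK, fun v => ?_, hkill⟩
  linear_combination (norm := module) hkill v + hKB v

lemma mem_span_wedge_of_isAlt [FiniteDimensional ℝ V] {ω : V →ₗ[ℝ] V →ₗ[ℝ] ℂ}
    (hω : ω.IsAlt) : ω ∈ Submodule.span ℂ (Set.range (Function.uncurry (wedge (V := V)))) := by
  let b := Module.finBasis ℝ V
  let e i : V →ₗ[ℝ] ℂ := Algebra.linearMap ℝ ℂ ∘ₗ b.coord i
  have h2ω : (2 : ℂ) • ω = ∑ i, wedge (e i) (ω (b i)) := by
    refine LinearMap.ext_basis b b fun i j => ?_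
    simp only [LinearMap.smul_apply, smul_eq_mul, LinearMap.coe_sum, Finset.sum_apply,
      wedge_apply, LinearMap.coe_comp, Function.comp_apply, Module.Basis.coord_apply,
      Module.Basis.repr_self, Finsupp.single_apply, Algebra.linearMap_apply,
      MonoidWithZeroHom.map_ite_one_zero, ite_mul, one_mul, zero_mul, Finset.sum_sub_distrib,
      Finset.sum_ite_eq, Finset.mem_univ, ↓reduceIte, e]
    rw [← hω.neg]
    ring
  have hω' : ω = (1 / 2 : ℂ) • ∑ i, wedge (e i) (ω (b i)) := by
    rw [← h2ω, smul_smul]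
    norm_num
  rw [hω']
  exact Submodule.smul_mem _ _
    (Submodule.sum_mem _ fun i _ => Submodule.subset_span ⟨(e i, ω (b i)), rfl⟩)

lemma wedge_mem_type20_sup_type20_sup_type11 {J J' B : V →ₗ[ℝ] V} (hJ : ∀ v, J (J v) = -v)
    (hJ' : ∀ v, J' (J' v) = -v) (hB : ∀ v, B (J v - J' v) = v) (ξ ζ : V →ₗ[ℝ] ℂ) :
    wedge ξ ζ ∈ type20Submodule J ⊔ type20Submodule J' ⊔ type11Submodule J J' := by
  set ξ₁ := funcProj J B ξ
  set ξ₂ := funcProj J' (-B) ξ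
  set ζ₁ := funcProj J B ζ
  set ζ₂ := funcProj J' (-B) ζ
  have hsplit : wedge ξ ζ = wedge ξ₁ ζ₁ + wedge ξ₂ ζ₂ + (wedge ξ₁ ζ₂ - wedge ζ₁ ξ₂) := by
    conv_lhs => rw [← funcProj_add_funcProj_neg hB ξ, ← funcProj_add_funcProj_neg hB ζ]
    ext v w
    simp only [wedge_apply, LinearMap.add_apply, LinearMap.sub_apply]
    ring
  have h₁ := funcProj_map_complexStructure hJ B
  have h₂ := funcProj_map_complexStructure hJ' (-B)
  rw [hsplit]
  exact add_mem
    (add_mem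
      (Submodule.mem_sup_left (Submodule.mem_sup_left (wedge_mem_type20Submodule (h₁ ξ) (h₁ ζ))))
      (Submodule.mem_sup_left (Submodule.mem_sup_right (wedge_mem_type20Submodule (h₂ ξ) (h₂ ζ)))))
    (Submodule.mem_sup_right
      (sub_mem (wedge_mem_type11Submodule (h₁ ξ) (h₂ ζ)) (wedge_mem_type11Submodule (h₁ ζ) (h₂ ξ))))

lemma mem_type20_sup_type20_sup_type11_of_isAlt [FiniteDimensional ℝ V] {J J' : V →ₗ[ℝ] V}
    (hJ : ∀ v, J (J v) = -v) (hJ' : ∀ v, J' (J' v) = -v) (hinj : Function.Injective (J - J'))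
    {ω : V →ₗ[ℝ] V →ₗ[ℝ] ℂ} (hω : ω.IsAlt) :
    ω ∈ type20Submodule J ⊔ type20Submodule J' ⊔ type11Submodule J J' := by
  obtain ⟨B, hB, -⟩ := exists_inverse_sub hJ hJ' hinj
  refine Submodule.span_le.2 ?_ (mem_span_wedge_of_isAlt hω)
  rintro _ ⟨⟨ξ, ζ⟩, rfl⟩
  exact wedge_mem_type20_sup_type20_sup_type11 hJ hJ' hB ξ ζ

lemma eq_of_add_add_eq_add_add [FiniteDimensional ℝ V] {J J' : V →ₗ[ℝ] V}
    (hJ : ∀ v, J (J v) = -v) (hJ' : ∀ v, J' (J' v) = -v) (hinj : Function.Injective (J - J'))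
    {a b c a' b' c' : V →ₗ[ℝ] V →ₗ[ℝ] ℂ}
    (ha : a ∈ type20Submodule J) (hb : b ∈ type20Submodule J') (hc : c ∈ type11Submodule J J')
    (ha' : a' ∈ type20Submodule J) (hb' : b' ∈ type20Submodule J')
    (hc' : c' ∈ type11Submodule J J') (h : a + b + c = a' + b' + c') :
    a = a' ∧ b = b' ∧ c = c' := by
  obtain ⟨B, -, hfix, hkill⟩ := exists_inverse_sub hJ hJ' hinj
  obtain ⟨B', -, hfix', hkill'⟩ :=
    exists_inverse_sub hJ' hJ (by rw [← neg_sub]; exact neg_injective.comp hinj)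
  obtain rfl : a = a' := by
    rw [← formProj_add_add hfix hkill ha hb hc, h, formProj_add_add hfix hkill ha' hb' hc']
  rw [type11Submodule_comm] at hc hc'
  obtain rfl : b = b' := by
    rw [← formProj_add_add hfix' hkill' hb ha hc, add_comm b, h, add_comm a,
      formProj_add_add hfix' hkill' hb' ha hc']
  exact ⟨rfl, rfl, add_left_cancel h⟩

end

theorem two_form_type_decomposition
    (V : Type*) [AddCommGroup V] [Module ℝ V] [FiniteDimensional ℝ V]
    (J Jstar : V →ₗ[ℝ] V)
    (hJ : J ∘ₗ J = -LinearMap.id) (hJstar : Jstar ∘ₗ Jstar = -LinearMap.id)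
    (hinj : Function.Injective (J - Jstar)) :
    ∀ ω : V →ₗ[ℝ] V →ₗ[ℝ] ℂ, (∀ v, ω v v = 0) →
      ∃! t : (V →ₗ[ℝ] V →ₗ[ℝ] ℂ) × (V →ₗ[ℝ] V →ₗ[ℝ] ℂ) × (V →ₗ[ℝ] V →ₗ[ℝ] ℂ),
        ω = t.1 + t.2.1 + t.2.2 ∧
        (∀ v, t.1 v v = 0) ∧ (∀ v w, t.1 (J v) w = I * t.1 v w) ∧
        (∀ v, t.2.1 v v = 0) ∧ (∀ v w, t.2.1 (Jstar v) w = I * t.2.1 v w) ∧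
        IsType11 V J Jstar t.2.2 := by
  intro ω hω
  have hJv : ∀ v, J (J v) = -v := fun v => by simpa using LinearMap.congr_fun hJ v
  have hJstarv : ∀ v, Jstar (Jstar v) = -v := fun v => by
    simpa using LinearMap.congr_fun hJstar v
  obtain ⟨_, hab, c, hc, rfl⟩ :=
    Submodule.mem_sup.1 (mem_type20_sup_type20_sup_type11_of_isAlt hJv hJstarv hinj hω)
  obtain ⟨a, ha, b, hb, rfl⟩ := Submodule.mem_sup.1 hab
  refine ⟨(a, b, c), ⟨rfl, ha.1, ha.2, hb.1, hb.2, hc⟩, ?_⟩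
  rintro ⟨a', b', c'⟩ ⟨h, ha'₀, ha'J, hb'₀, hb'J, hc'⟩
  obtain ⟨rfl, rfl, rfl⟩ :=
    eq_of_add_add_eq_add_add hJv hJstarv hinj ⟨ha'₀, ha'J⟩ ⟨hb'₀, hb'J⟩ hc' ha hb hc h.symm
  rfl
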